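/- arXiv:1309.2822 — 2 statements merged into one kernel-verified Lean document; each statement's English description precedes it below -/
import Mathlib

section
/- (Lions' lemma, abstract form of Lemma 5.9.) Let H be a real Hilbert space, let X_1, …, X_n be closed subspaces of H with orthogonal projections P_1, …, P_n, and set P := Σ_{i=1}^n P_i. Let c > 0 and let v ∈ H admit a representation v = Σ_{i=1}^n v_i with v_i ∈ X_i for each i and Σ_{i=1}^n ‖v_i‖² ≤ c^{-1} ‖v‖². Then ⟨Pv, v⟩ ≥ c ‖v‖². -/
/-!
Write `P i v` for the projection of `v` onto `X i`. Since `v - P i v ⊥ X i`, testing the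
decomposition `v = ∑ i, v i` against `v` gives `‖v‖² = ∑ i, ⟪P i v, v i⟫`, while
`⟪P v, v⟫ = ∑ i, ‖P i v‖²`. Cauchy–Schwarz, first in `H` and then in `ℝⁿ`, yields
`‖v‖⁴ ≤ ⟪P v, v⟫ · ∑ i, ‖v i‖² ≤ c⁻¹ ⟪P v, v⟫ ‖v‖²`, and dividing by `‖v‖²` finishes.
-/

open Finset

section Projection

variable {H : Type*} [SeminormedAddCommGroup H] [InnerProductSpace ℝ H]
  {K : Submodule ℝ H} {x y : H}

theorem real_inner_left_eq_of_sub_orthogonal (hxy : ∀ w ∈ K, inner ℝ (x - y) w = 0)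
    {w : H} (hw : w ∈ K) : inner ℝ x w = inner ℝ y w := by
  rw [← sub_eq_zero, ← inner_sub_left]
  exact hxy w hw

theorem real_inner_self_eq_norm_sq_of_sub_orthogonal (hy : y ∈ K)
    (hxy : ∀ w ∈ K, inner ℝ (x - y) w = 0) : inner ℝ y x = ‖y‖ ^ 2 := by
  rw [real_inner_comm, real_inner_left_eq_of_sub_orthogonal hxy hy, real_inner_self_eq_norm_sq]

end Projection

theorem sq_sum_real_inner_le {ι H : Type*} [SeminormedAddCommGroup H] [InnerProductSpace ℝ H]
    (s : Finset ι) (a b : ι → H) :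
    (∑ i ∈ s, inner ℝ (a i) (b i)) ^ 2 ≤ (∑ i ∈ s, ‖a i‖ ^ 2) * ∑ i ∈ s, ‖b i‖ ^ 2 := by
  have hsum : |∑ i ∈ s, inner ℝ (a i) (b i)| ≤ ∑ i ∈ s, ‖a i‖ * ‖b i‖ :=
    (abs_sum_le_sum_abs _ s).trans (sum_le_sum fun i _ => abs_real_inner_le_norm _ _)
  calc (∑ i ∈ s, inner ℝ (a i) (b i)) ^ 2
      = |∑ i ∈ s, inner ℝ (a i) (b i)| ^ 2 := (sq_abs _).symm
    _ ≤ (∑ i ∈ s, ‖a i‖ * ‖b i‖) ^ 2 := pow_le_pow_left₀ (abs_nonneg _) hsum 2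
    _ ≤ (∑ i ∈ s, ‖a i‖ ^ 2) * ∑ i ∈ s, ‖b i‖ ^ 2 := sum_mul_sq_le_sq_mul_sq s _ _

theorem mul_le_of_sq_le_mul_inv_mul {a c S : ℝ} (hc : 0 < c) (ha : 0 ≤ a) (hS : 0 ≤ S)
    (h : a ^ 2 ≤ S * (c⁻¹ * a)) : c * a ≤ S := by
  rcases ha.eq_or_lt with rfl | ha
  · simpa using hS
  · have : c * a * a ≤ S * a := by
      calc c * a * a = c * a ^ 2 := by ring
        _ ≤ c * (S * (c⁻¹ * a)) := mul_le_mul_of_nonneg_left h hc.le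
        _ = S * a := by field_simp
    exact le_of_mul_le_mul_right this ha

section Decomposition

variable {ι H : Type*} [Fintype ι] [SeminormedAddCommGroup H] [InnerProductSpace ℝ H]
  {X : ι → Submodule ℝ H} {v : H} {y vdec : ι → H}

theorem norm_sq_eq_sum_real_inner_of_decomposition (hy : ∀ i, ∀ w ∈ X i, inner ℝ (v - y i) w = 0)
    (hdecmem : ∀ i, vdec i ∈ X i) (hdecsum : v = ∑ i, vdec i) :
    ‖v‖ ^ 2 = ∑ i, inner ℝ (y i) (vdec i) := by
  calc ‖v‖ ^ 2 = inner ℝ v (∑ i, vdec i) := by rw [← hdecsum, real_inner_self_eq_norm_sq]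
    _ = ∑ i, inner ℝ (y i) (vdec i) := by
      rw [inner_sum]
      exact sum_congr rfl fun i _ => real_inner_left_eq_of_sub_orthogonal (hy i) (hdecmem i)

theorem mul_norm_sq_le_sum_norm_sq_of_stable_decomposition {c : ℝ} (hc : 0 < c)
    (hy : ∀ i, ∀ w ∈ X i, inner ℝ (v - y i) w = 0)
    (hdecmem : ∀ i, vdec i ∈ X i) (hdecsum : v = ∑ i, vdec i)
    (hstable : ∑ i, ‖vdec i‖ ^ 2 ≤ c⁻¹ * ‖v‖ ^ 2) :
    c * ‖v‖ ^ 2 ≤ ∑ i, ‖y i‖ ^ 2 := by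
  have hS : 0 ≤ ∑ i, ‖y i‖ ^ 2 := sum_nonneg fun i _ => sq_nonneg _
  refine mul_le_of_sq_le_mul_inv_mul hc (sq_nonneg _) hS ?_
  calc (‖v‖ ^ 2) ^ 2 = (∑ i, inner ℝ (y i) (vdec i)) ^ 2 := by
        rw [norm_sq_eq_sum_real_inner_of_decomposition hy hdecmem hdecsum]
    _ ≤ (∑ i, ‖y i‖ ^ 2) * ∑ i, ‖vdec i‖ ^ 2 := sq_sum_real_inner_le _ _ _
    _ ≤ (∑ i, ‖y i‖ ^ 2) * (c⁻¹ * ‖v‖ ^ 2) := mul_le_mul_of_nonneg_left hstable hS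

end Decomposition

theorem lions_lemma_general
    {H : Type*} [NormedAddCommGroup H] [InnerProductSpace ℝ H]
    (n : ℕ) (X : Fin n → Submodule ℝ H)
    (P : Fin n → H →L[ℝ] H)
    (hmem : ∀ i v, P i v ∈ X i)
    (hproj : ∀ i v, ∀ w ∈ X i, (inner ℝ (v - P i v) w : ℝ) = 0)
    (c : ℝ) (hc : 0 < c) (v : H) (vdec : Fin n → H)
    (hdecmem : ∀ i, vdec i ∈ X i)
    (hdecsum : v = ∑ i, vdec i)
    (hstable : ∑ i, ‖vdec i‖ ^ 2 ≤ c⁻¹ * ‖v‖ ^ 2) :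
    c * ‖v‖ ^ 2 ≤ (inner ℝ ((∑ i, P i) v) v : ℝ) := by
  have hPv : inner ℝ ((∑ i, P i) v) v = ∑ i, ‖P i v‖ ^ 2 := by
    rw [_root_.sum_apply, sum_inner]
    exact sum_congr rfl fun i _ =>
      real_inner_self_eq_norm_sq_of_sub_orthogonal (hmem i v) (hproj i v)
  rw [hPv]
  exact mul_norm_sq_le_sum_norm_sq_of_stable_decomposition hc (fun i => hproj i v)
    hdecmem hdecsum hstable

/-- Lions' lemma (abstract form of Lemma 5.9): if `v = ∑ i, v i` with `v i ∈ X i`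
and `∑ i ‖v i‖² ≤ c⁻¹ ‖v‖²`, then the additive Schwarz operator `P = ∑ i, P i`
satisfies `⟨P v, v⟩ ≥ c ‖v‖²`. -/
theorem lions_lemma
    {H : Type*} [NormedAddCommGroup H] [InnerProductSpace ℝ H] [CompleteSpace H]
    (n : ℕ) (X : Fin n → Submodule ℝ H) (hX : ∀ i, IsClosed (X i : Set H))
    (P : Fin n → H →L[ℝ] H)
    (hmem : ∀ i v, P i v ∈ X i)
    (hproj : ∀ i v, ∀ w ∈ X i, (inner ℝ (v - P i v) w : ℝ) = 0)
    (c : ℝ) (hc : 0 < c) (v : H) (vdec : Fin n → H)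
    (hdecmem : ∀ i, vdec i ∈ X i)
    (hdecsum : v = ∑ i, vdec i)
    (hstable : ∑ i, ‖vdec i‖ ^ 2 ≤ c⁻¹ * ‖v‖ ^ 2) :
    c * ‖v‖ ^ 2 ≤ (inner ℝ ((∑ i, P i) v) v : ℝ) :=
  lions_lemma_general n X P hmem hproj c hc v vdec hdecmem hdecsum hstable
end

section
/- (Abstract upper bound for additive Schwarz operators, following the proof in Section 5.6.) Let H be a real Hilbert space, M ∈ ℕ, and let V_0 ⊆ V_1 ⊆ … ⊆ V_{M+1} be nested closed subspaces of H with orthogonal projections G_k onto V_k; set G_{−1} := 0. For m = 0, …, M let Q_m : H → H be a bounded self-adjoint linear operator with ⟨Q_m w, w⟩ ≥ 0 for all w ∈ H and with range contained in V_{m+1}, i.e. Q_m w ∈ V_{m+1} for all w ∈ H. Assume the strengthened Cauchy–Schwarz estimates: there is C > 0 such that ⟨Q_m w, w⟩ ≤ C · 2^{−(m+1−k)} ‖w‖² for all 0 ≤ m ≤ M, all 0 ≤ k ≤ m+1, and all w ∈ V_k. Then for every v ∈ V_{M+1} it holds Σ_{m=0}^M ⟨Q_m v, v⟩ ≤ C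 K² ‖v‖², where K := Σ_{j=0}^∞ 2^{−j/2} = (1 − 2^{−1/2})^{−1}. -/
/-! Decompose `v = ∑ₖ dₖ` into the increments `dₖ = G k v - G (k-1) v ∈ V k`, which are
mutually orthogonal. For a fixed level `m`, Cauchy–Schwarz for the positive operator `Q m` and
the strengthened Cauchy–Schwarz estimate give `⟨Q m v, v⟩ ≤ C (∑ₖ r^(m+1-k) ‖dₖ‖)²` with
`r = 2^(-1/2)`; the terms with `k > m + 1` vanish because `Q m` maps into `V (m+1) ⟂ dₖ`.
Summing over `m`, the Schur test for the kernel `r^(m+1-k)`, whose row and column sums are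
bounded by `K = ∑ⱼ rʲ`, and Pythagoras `∑ₖ ‖dₖ‖² = ‖v‖²` give the bound `C K² ‖v‖²`. -/

open Finset

section InnerSums

variable {H ι : Type*} [NormedAddCommGroup H] [InnerProductSpace ℝ H]

theorem norm_sum_sq_eq_sum_norm_sq (s : Finset ι) (d : ι → H)
    (horth : ∀ i ∈ s, ∀ j ∈ s, i ≠ j → inner ℝ (d i) (d j) = 0) :
    ‖∑ i ∈ s, d i‖ ^ 2 = ∑ i ∈ s, ‖d i‖ ^ 2 := by
  rw [← real_inner_self_eq_norm_sq, sum_inner]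
  refine sum_congr rfl fun i hi => ?_
  rw [inner_sum, sum_eq_single_of_mem i hi fun j hj hji => horth i hi j hj hji.symm,
    real_inner_self_eq_norm_sq]

namespace ContinuousLinearMap.IsPositive

variable {T : H →L[ℝ] H}

theorem inner_le_sqrt_mul_sqrt (hT : T.IsPositive) (x y : H) :
    inner ℝ (T x) y ≤ √(inner ℝ (T x) x) * √(inner ℝ (T y) y) := by
  have hquad : ∀ t : ℝ, 0 ≤ inner ℝ (T y) y * (t * t) + 2 * inner ℝ (T x) y * t
      + inner ℝ (T x) x := fun t => by
    have h := hT.inner_nonneg_left (x + t • y)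
    have hsym : inner ℝ (T y) x = inner ℝ (T x) y := by
      rw [hT.inner_left_eq_inner_right, real_inner_comm]
    simp only [map_add, map_smul, inner_add_left, inner_add_right, real_inner_smul_left,
      real_inner_smul_right, hsym] at h
    linarith
  have hsq : inner ℝ (T x) y ^ 2 ≤ inner ℝ (T x) x * inner ℝ (T y) y := by
    have hdisc := discrim_le_zero hquad
    rw [discrim] at hdisc
    nlinarith
  rw [← Real.sqrt_mul (hT.inner_nonneg_left x)]
  exact Real.le_sqrt_of_sq_le hsq

theorem inner_sum_self_le_sq (hT : T.IsPositive) (s : Finset ι) (d : ι → H) :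
    inner ℝ (T (∑ i ∈ s, d i)) (∑ i ∈ s, d i) ≤
      (∑ i ∈ s, √(inner ℝ (T (d i)) (d i))) ^ 2 := by
  rw [map_sum, sum_inner, sq, sum_mul_sum]
  exact sum_le_sum fun i _ => by
    rw [inner_sum]
    exact sum_le_sum fun j _ => hT.inner_le_sqrt_mul_sqrt (d i) (d j)

end ContinuousLinearMap.IsPositive

end InnerSums

theorem Finset.sum_sq_sum_mul_le {ι κ : Type*} (s : Finset ι) (t : Finset κ)
    {a : ι → κ → ℝ} {K K' : ℝ} (c : κ → ℝ) (ha : ∀ i ∈ s, ∀ k ∈ t, 0 ≤ a i k)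
    (hK : 0 ≤ K)
    (hrow : ∀ i ∈ s, ∑ k ∈ t, a i k ≤ K) (hcol : ∀ k ∈ t, ∑ i ∈ s, a i k ≤ K') :
    ∑ i ∈ s, (∑ k ∈ t, a i k * c k) ^ 2 ≤ K * K' * ∑ k ∈ t, c k ^ 2 := by
  have hrowCS : ∀ i ∈ s, (∑ k ∈ t, a i k * c k) ^ 2 ≤ K * ∑ k ∈ t, a i k * c k ^ 2 :=
    fun i hi => by
      have hac : ∀ k ∈ t, 0 ≤ a i k * c k ^ 2 := fun k hk =>
        mul_nonneg (ha i hi k hk) (sq_nonneg _)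
      refine (sum_sq_le_sum_mul_sum_of_sq_le_mul t (ha i hi) hac fun k _ => le_of_eq ?_).trans
        (mul_le_mul_of_nonneg_right (hrow i hi) (sum_nonneg hac))
      ring
  calc ∑ i ∈ s, (∑ k ∈ t, a i k * c k) ^ 2
        ≤ ∑ i ∈ s, K * ∑ k ∈ t, a i k * c k ^ 2 := sum_le_sum hrowCS
    _ = K * ∑ k ∈ t, (∑ i ∈ s, a i k) * c k ^ 2 := by
        simp only [← mul_sum, sum_mul]
        rw [sum_comm]
    _ ≤ K * ∑ k ∈ t, K' * c k ^ 2 := by gcongr with k hk; exact hcol k hk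
    _ = K * K' * ∑ k ∈ t, c k ^ 2 := by rw [← mul_sum, mul_assoc]

theorem sum_pow_le_of_injOn {ι : Type*} {s : Finset ι} {f : ι → ℕ} (hf : Set.InjOn f s)
    {r : ℝ} (hr₀ : 0 ≤ r) (hr₁ : r < 1) : ∑ i ∈ s, r ^ f i ≤ (1 - r)⁻¹ := by
  rw [← sum_image hf, ← tsum_geometric_of_lt_one hr₀ hr₁]
  exact (summable_geometric_of_lt_one hr₀ hr₁).sum_le_tsum _ fun j _ => pow_nonneg hr₀ j

def geomKernel (r : ℝ) (n k : ℕ) : ℝ := if k ≤ n then r ^ (n - k) else 0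

section GeomKernel

variable {r : ℝ}

theorem geomKernel_nonneg (hr₀ : 0 ≤ r) (n k : ℕ) : 0 ≤ geomKernel r n k := by
  unfold geomKernel; split_ifs <;> positivity

theorem sum_geomKernel_le (hr₀ : 0 ≤ r) (hr₁ : r < 1) (n : ℕ) (t : Finset ℕ) :
    ∑ k ∈ t, geomKernel r n k ≤ (1 - r)⁻¹ := by
  simp only [geomKernel]
  rw [← sum_filter]
  exact sum_pow_le_of_injOn
    (fun a ha b hb h => by simp only [coe_filter, Set.mem_ofPred_eq] at ha hb h; omega) hr₀ hr₁

theorem sum_geomKernel_add_le (hr₀ : 0 ≤ r) (hr₁ : r < 1) (j k : ℕ) (s : Finset ℕ) :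
    ∑ m ∈ s, geomKernel r (m + j) k ≤ (1 - r)⁻¹ := by
  simp only [geomKernel]
  rw [← sum_filter]
  exact sum_pow_le_of_injOn
    (fun a ha b hb h => by simp only [coe_filter, Set.mem_ofPred_eq] at ha hb h; omega) hr₀ hr₁

end GeomKernel

def increment {A : Type*} [AddCommGroup A] (p : ℕ → A) : ℕ → A
  | 0 => p 0
  | k + 1 => p (k + 1) - p k

theorem sum_range_increment {A : Type*} [AddCommGroup A] (p : ℕ → A) (n : ℕ) :
    ∑ k ∈ range (n + 1), increment p k = p n := by
  induction n with
  | zero => simp [increment]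
  | succ n ih => rw [sum_range_succ, ih, increment, add_sub_cancel]

section Galerkin

variable {H : Type*} [NormedAddCommGroup H] [InnerProductSpace ℝ H]

theorem Submodule.eq_of_forall_inner_sub_eq_zero {U : Submodule ℝ H} {v p : H} (hv : v ∈ U)
    (hp : p ∈ U) (hperp : ∀ w ∈ U, inner ℝ (v - p) w = 0) : p = v :=
  (sub_eq_zero.mp (inner_self_eq_zero.mp (hperp _ (U.sub_mem hv hp)))).symm

variable {V : ℕ → Submodule ℝ H} {N : ℕ} {v : H} {p : ℕ → H}

theorem increment_mem (hV : MonotoneOn V (Set.Iic N)) (hp : ∀ k ≤ N, p k ∈ V k) {k : ℕ}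
    (hk : k ≤ N) : increment p k ∈ V k := by
  cases k with
  | zero => exact hp 0 hk
  | succ k =>
    exact (V _).sub_mem (hp _ hk)
      (hV (Set.mem_Iic.mpr (by omega)) (Set.mem_Iic.mpr hk) k.le_succ (hp k (by omega)))

theorem inner_increment_eq_zero (hV : MonotoneOn V (Set.Iic N))
    (hperp : ∀ k ≤ N, ∀ w ∈ V k, inner ℝ (v - p k) w = 0) {l k : ℕ} (hlk : l < k)
    (hk : k ≤ N) {w : H} (hw : w ∈ V l) : inner ℝ (increment p k) w = 0 := by
  obtain ⟨j, rfl⟩ : ∃ j, k = j + 1 := ⟨k - 1, by omega⟩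
  have hwj : w ∈ V j :=
    hV (Set.mem_Iic.mpr (by omega)) (Set.mem_Iic.mpr (by omega)) (by omega) hw
  have hwj' : w ∈ V (j + 1) := hV (Set.mem_Iic.mpr (by omega)) (Set.mem_Iic.mpr hk) j.le_succ hwj
  have hinc : increment p (j + 1) = (v - p j) - (v - p (j + 1)) := by
    rw [increment]; abel
  rw [hinc, inner_sub_left, hperp j (by omega) w hwj, hperp (j + 1) hk w hwj', sub_zero]

theorem sum_norm_sq_increment (hV : MonotoneOn V (Set.Iic N)) (hp : ∀ k ≤ N, p k ∈ V k)
    (hperp : ∀ k ≤ N, ∀ w ∈ V k, inner ℝ (v - p k) w = 0) :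
    ∑ k ∈ range (N + 1), ‖increment p k‖ ^ 2 = ‖p N‖ ^ 2 := by
  have horth : ∀ i ≤ N, ∀ j ≤ N, i < j → inner ℝ (increment p j) (increment p i) = 0 :=
    fun i hi j hj hij => inner_increment_eq_zero hV hperp hij hj (increment_mem hV hp hi)
  rw [← sum_range_increment p N, norm_sum_sq_eq_sum_norm_sq]
  intro i hi j hj hij
  simp only [mem_range, Nat.lt_succ_iff] at hi hj
  rcases hij.lt_or_gt with h | h
  · rw [real_inner_comm]; exact horth i hi j hj h
  · exact horth j hj i hi h

theorem sqrt_inner_map_increment_le (hV : MonotoneOn V (Set.Iic N))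
    (hp : ∀ k ≤ N, p k ∈ V k) (hperp : ∀ k ≤ N, ∀ w ∈ V k, inner ℝ (v - p k) w = 0)
    {T : H →L[ℝ] H} {n : ℕ} (hrange : ∀ w, T w ∈ V n) {C r : ℝ} (hr₀ : 0 ≤ r)
    (hCS : ∀ k ≤ n, ∀ w ∈ V k, inner ℝ (T w) w ≤ C * (r ^ 2) ^ (n - k) * ‖w‖ ^ 2)
    {k : ℕ} (hk : k ≤ N) :
    √(inner ℝ (T (increment p k)) (increment p k)) ≤
      √C * (geomKernel r n k * ‖increment p k‖) := by
  by_cases hkn : k ≤ n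
  · have hbound : C * (r ^ 2) ^ (n - k) * ‖increment p k‖ ^ 2 =
        C * (r ^ (n - k) * ‖increment p k‖) ^ 2 := by ring
    calc √(inner ℝ (T (increment p k)) (increment p k))
        ≤ √(C * (r ^ (n - k) * ‖increment p k‖) ^ 2) :=
          Real.sqrt_le_sqrt (hbound ▸ hCS k hkn _ (increment_mem hV hp hk))
      _ = √C * (geomKernel r n k * ‖increment p k‖) := by
          rw [Real.sqrt_mul' _ (sq_nonneg _), Real.sqrt_sq (by positivity), geomKernel, if_pos hkn]
  · have hzero : inner ℝ (T (increment p k)) (increment p k) = 0 := by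
      rw [real_inner_comm]
      exact inner_increment_eq_zero hV hperp (by omega) hk (hrange _)
    rw [hzero, geomKernel, if_neg hkn]
    simp

theorem inner_map_le_sq_sum_geomKernel (hV : MonotoneOn V (Set.Iic N))
    (hp : ∀ k ≤ N, p k ∈ V k) (hperp : ∀ k ≤ N, ∀ w ∈ V k, inner ℝ (v - p k) w = 0)
    {T : H →L[ℝ] H} (hT : T.IsPositive) {n : ℕ} (hrange : ∀ w, T w ∈ V n) {C r : ℝ}
    (hC : 0 ≤ C) (hr₀ : 0 ≤ r)
    (hCS : ∀ k ≤ n, ∀ w ∈ V k, inner ℝ (T w) w ≤ C * (r ^ 2) ^ (n - k) * ‖w‖ ^ 2) :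
    inner ℝ (T (p N)) (p N) ≤
      C * (∑ k ∈ range (N + 1), geomKernel r n k * ‖increment p k‖) ^ 2 := by
  rw [← sum_range_increment p N]
  calc _ ≤ (∑ k ∈ range (N + 1), √(inner ℝ (T (increment p k)) (increment p k))) ^ 2 :=
        hT.inner_sum_self_le_sq _ _
    _ ≤ (∑ k ∈ range (N + 1), √C * (geomKernel r n k * ‖increment p k‖)) ^ 2 := by
        gcongr with k hk
        exact sqrt_inner_map_increment_le hV hp hperp hrange hr₀ hCS
          (Nat.lt_succ_iff.mp (mem_range.mp hk))
    _ = _ := by rw [← mul_sum, mul_pow, Real.sq_sqrt hC]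

theorem sum_inner_map_self_le_of_geom_decay (hV : MonotoneOn V (Set.Iic (N + 1)))
    (hp : ∀ k ≤ N + 1, p k ∈ V k)
    (hperp : ∀ k ≤ N + 1, ∀ w ∈ V k, inner ℝ (v - p k) w = 0) {T : ℕ → H →L[ℝ] H}
    (hT : ∀ m ≤ N, (T m).IsPositive)
    (hrange : ∀ m ≤ N, ∀ w, T m w ∈ V (m + 1)) {C r : ℝ} (hC : 0 ≤ C) (hr₀ : 0 ≤ r)
    (hr₁ : r < 1)
    (hCS : ∀ m ≤ N, ∀ k ≤ m + 1, ∀ w ∈ V k,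
      inner ℝ (T m w) w ≤ C * (r ^ 2) ^ (m + 1 - k) * ‖w‖ ^ 2) :
    ∑ m ∈ range (N + 1), inner ℝ (T m (p (N + 1))) (p (N + 1)) ≤
      C * (1 - r)⁻¹ ^ 2 * ‖p (N + 1)‖ ^ 2 := by
  set c : ℕ → ℝ := fun k => ‖increment p k‖
  calc ∑ m ∈ range (N + 1), inner ℝ (T m (p (N + 1))) (p (N + 1))
      ≤ ∑ m ∈ range (N + 1),
          C * (∑ k ∈ range (N + 2), geomKernel r (m + 1) k * c k) ^ 2 :=
        sum_le_sum fun m hm => by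
          have hmN : m ≤ N := Nat.lt_succ_iff.mp (mem_range.mp hm)
          exact inner_map_le_sq_sum_geomKernel hV hp hperp (hT m hmN) (hrange m hmN) hC hr₀
            (hCS m hmN)
    _ = C * ∑ m ∈ range (N + 1), (∑ k ∈ range (N + 2), geomKernel r (m + 1) k * c k) ^ 2 :=
        (mul_sum ..).symm
    _ ≤ C * ((1 - r)⁻¹ * (1 - r)⁻¹ * ∑ k ∈ range (N + 2), c k ^ 2) := by
        gcongr
        exact sum_sq_sum_mul_le _ _ _ (fun m _ k _ => geomKernel_nonneg hr₀ _ _)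
          (inv_nonneg.mpr (sub_nonneg.mpr hr₁.le))
          (fun m _ => sum_geomKernel_le hr₀ hr₁ _ _)
          (fun k _ => sum_geomKernel_add_le hr₀ hr₁ 1 k _)
    _ = C * (1 - r)⁻¹ ^ 2 * ‖p (N + 1)‖ ^ 2 := by
        rw [sum_norm_sq_increment hV hp hperp]; ring

end Galerkin

theorem additive_schwarz_upper_bound_general
    {H : Type*} [NormedAddCommGroup H] [InnerProductSpace ℝ H]
    (M : ℕ) (V : ℕ → Submodule ℝ H)
    (hnested : ∀ k ≤ M, V k ≤ V (k + 1))
    (G : ℕ → H →L[ℝ] H)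
    (hGmem : ∀ k ≤ M + 1, ∀ v : H, G k v ∈ V k)
    (hGproj : ∀ k ≤ M + 1, ∀ v : H, ∀ w ∈ V k, (inner ℝ (v - G k v) w : ℝ) = 0)
    (Q : ℕ → H →L[ℝ] H)
    (hQsym : ∀ m ≤ M, ∀ v w : H, (inner ℝ (Q m v) w : ℝ) = inner ℝ v (Q m w))
    (hQpos : ∀ m ≤ M, ∀ w : H, 0 ≤ (inner ℝ (Q m w) w : ℝ))
    (hQrange : ∀ m ≤ M, ∀ w : H, Q m w ∈ V (m + 1))
    (C : ℝ) (hC : 0 < C)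
    (hCS : ∀ m ≤ M, ∀ k ≤ m + 1, ∀ w ∈ V k,
      (inner ℝ (Q m w) w : ℝ) ≤ C * (1 / 2 : ℝ) ^ (m + 1 - k) * ‖w‖ ^ 2) :
    ∀ v ∈ V (M + 1),
      ∑ m ∈ Finset.range (M + 1), (inner ℝ (Q m v) v : ℝ)
        ≤ C * ((1 - (Real.sqrt 2)⁻¹)⁻¹) ^ 2 * ‖v‖ ^ 2 := by
  intro v hv
  have hV : MonotoneOn V (Set.Iic (M + 1)) :=
    monotoneOn_of_le_succ Set.ordConnected_Iic fun k _ _ hk =>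
      hnested k (Nat.le_of_succ_le_succ hk)
  have hp : ∀ k ≤ M + 1, G k v ∈ V k := fun k hk => hGmem k hk v
  have hperp : ∀ k ≤ M + 1, ∀ w ∈ V k, inner ℝ (v - G k v) w = 0 :=
    fun k hk => hGproj k hk v
  have hpv : G (M + 1) v = v :=
    Submodule.eq_of_forall_inner_sub_eq_zero hv (hp _ le_rfl) (hperp _ le_rfl)
  have hr₂ : (√2)⁻¹ ^ 2 = 1 / 2 := by rw [inv_pow, Real.sq_sqrt zero_le_two, one_div]
  have hbound := sum_inner_map_self_le_of_geom_decay (p := fun k => G k v) hV hp hperp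
    (fun m hm => (Q m).isPositive_iff.mpr ⟨hQsym m hm, hQpos m hm⟩) hQrange hC.le
    (by positivity) (inv_lt_one_of_one_lt₀ Real.one_lt_sqrt_two) (hr₂ ▸ hCS)
  rwa [hpv] at hbound

/-- Abstract upper bound for additive Schwarz operators (Section 5.6): nested closed
subspaces `V 0 ⊆ … ⊆ V (M+1)` with orthogonal (Galerkin) projections `G k`,
nonnegative self-adjoint operators `Q m` mapping into `V (m+1)` and satisfying the
strengthened Cauchy-Schwarz estimates `⟨Q m w, w⟩ ≤ C 2^{-(m+1-k)} ‖w‖²` on `V k`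
for `k ≤ m+1`. Then `∑_{m=0}^M ⟨Q m v, v⟩ ≤ C K² ‖v‖²` for all `v ∈ V (M+1)`,
with `K = ∑_j 2^{-j/2} = (1 - 2^{-1/2})⁻¹ = (1 - (√2)⁻¹)⁻¹`. -/
theorem additive_schwarz_upper_bound
    {H : Type*} [NormedAddCommGroup H] [InnerProductSpace ℝ H] [CompleteSpace H]
    (M : ℕ) (V : ℕ → Submodule ℝ H)
    (hclosed : ∀ k ≤ M + 1, IsClosed (V k : Set H))
    (hnested : ∀ k ≤ M, V k ≤ V (k + 1))
    (G : ℕ → H →L[ℝ] H)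
    (hGmem : ∀ k ≤ M + 1, ∀ v : H, G k v ∈ V k)
    (hGproj : ∀ k ≤ M + 1, ∀ v : H, ∀ w ∈ V k, (inner ℝ (v - G k v) w : ℝ) = 0)
    (Q : ℕ → H →L[ℝ] H)
    (hQsym : ∀ m ≤ M, ∀ v w : H, (inner ℝ (Q m v) w : ℝ) = inner ℝ v (Q m w))
    (hQpos : ∀ m ≤ M, ∀ w : H, 0 ≤ (inner ℝ (Q m w) w : ℝ))
    (hQrange : ∀ m ≤ M, ∀ w : H, Q m w ∈ V (m + 1))
    (C : ℝ) (hC : 0 < C)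
    (hCS : ∀ m ≤ M, ∀ k ≤ m + 1, ∀ w ∈ V k,
      (inner ℝ (Q m w) w : ℝ) ≤ C * (1 / 2 : ℝ) ^ (m + 1 - k) * ‖w‖ ^ 2) :
    ∀ v ∈ V (M + 1),
      ∑ m ∈ Finset.range (M + 1), (inner ℝ (Q m v) v : ℝ)
        ≤ C * ((1 - (Real.sqrt 2)⁻¹)⁻¹) ^ 2 * ‖v‖ ^ 2 :=
  additive_schwarz_upper_bound_general M V hnested G hGmem hGproj Q hQsym hQpos hQrange C hC hCS
end
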